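/- Let $(\lambda_1,\lambda_2)\in D_0$, $\lambda_3<0$, $2<p<\frac{10}{3}$, $c>0$, and let $u\in S_c$ with $E(u)<0$ solve the stationary equation with Lagrange multiplier $\mu_c$, so that $P(u)=2\|\nabla u\|_2^2+3B(u)-4|\lambda_3|\delta_p\|u\|_p^p=0$ and $\mu_c c^2=-\frac{1}{2}\|\nabla u\|_2^2-B(u)+|\lambda_3|\|u\|_p^p$. If moreover $E(u)<-\kappa_{p,\lambda_3}c^{\frac{6-p}{2-p\delta_p}}$, then $\mu_c c^2 = -E(u)-\frac{1}{2}B(u)+\frac{(p-2)|\lambda_3|}{p}\|u\|_p^p>\kappa_{p,\lambda_3}c^{\frac{6-p}{2-p\delta_p}}$, i.e., $\mu_c>\kappa_{p,\lambda_3}c^{\frac{2(p-2)}{2-p\delta_p}}$. -/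

import Mathlib

/-!
Writing `G = ‖∇u‖₂²`, `N = ‖u‖_p^p`, the Pohozaev identity `P(u) = 0` eliminates `B(u)` from the
multiplier identity and leaves `μ_c c² = -E(u) + G/3 ≥ -E(u)`; the energy hypothesis then gives
the bound on `μ_c c²`, and dividing by `c²` gives the bound on `μ_c`, because
`(6 - p) - 2(2 - pδ_p) = 2(p - 2)`.
-/

open Real MeasureTheory

noncomputable section

abbrev E3 : Type := EuclideanSpace ℝ (Fin 3)

def InH1 (u : E3 → ℝ) : Prop :=
  MemLp u 2 volume ∧ MemLp (fun x => fderiv ℝ u x) 2 volume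

def dipK (x : E3) : ℝ := (1 - 3 * (x 2) ^ 2 / ‖x‖ ^ 2) / ‖x‖ ^ 3

def Bdip (l1 l2 : ℝ) (u : E3 → ℝ) : ℝ :=
  ∫ x : E3, (l1 * (u x) ^ 4 + l2 * (∫ y : E3, dipK (x - y) * (u y) ^ 2) * (u x) ^ 2)

def Efun (l1 l2 l3 p : ℝ) (u : E3 → ℝ) : ℝ :=
  (1 / 2) * (∫ x : E3, ‖fderiv ℝ u x‖ ^ 2) + (1 / 2) * Bdip l1 l2 u +
    (2 * l3 / p) * ∫ x : E3, |u x| ^ p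

section Energy

variable {l1 l2 l3 p : ℝ} {u : E3 → ℝ}

theorem Efun_eq_of_nonpos (hl3 : l3 ≤ 0) :
    Efun l1 l2 l3 p u = (1 / 2) * (∫ x : E3, ‖fderiv ℝ u x‖ ^ 2) + (1 / 2) * Bdip l1 l2 u -
      2 * |l3| / p * ∫ x : E3, |u x| ^ p := by
  rw [Efun, abs_of_nonpos hl3]
  ring

theorem neg_Efun_sub_half_Bdip_add (hl3 : l3 ≤ 0) (hp : p ≠ 0) :
    -(Efun l1 l2 l3 p u) - (1 / 2) * Bdip l1 l2 u +
        (p - 2) * |l3| / p * (∫ x : E3, |u x| ^ p) =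
      -(1 / 2) * (∫ x : E3, ‖fderiv ℝ u x‖ ^ 2) - Bdip l1 l2 u +
        |l3| * ∫ x : E3, |u x| ^ p := by
  rw [Efun_eq_of_nonpos hl3]
  field_simp
  ring

theorem neg_Efun_add_third_grad_of_pohozaev {δ : ℝ} (hl3 : l3 ≤ 0) (hp : p ≠ 0)
    (hδ : δ = 3 * (p - 2) / (2 * p))
    (hP : 2 * (∫ x : E3, ‖fderiv ℝ u x‖ ^ 2) + 3 * Bdip l1 l2 u -
        4 * |l3| * δ * (∫ x : E3, |u x| ^ p) = 0) :
    -(1 / 2) * (∫ x : E3, ‖fderiv ℝ u x‖ ^ 2) - Bdip l1 l2 u + |l3| * ∫ x : E3, |u x| ^ p =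
      -(Efun l1 l2 l3 p u) + (1 / 3) * ∫ x : E3, ‖fderiv ℝ u x‖ ^ 2 := by
  have hδN : 4 * |l3| * δ * (∫ x : E3, |u x| ^ p) =
      6 * |l3| * (∫ x : E3, |u x| ^ p) - 12 * |l3| / p * ∫ x : E3, |u x| ^ p := by
    rw [hδ]
    field_simp
    ring
  rw [Efun_eq_of_nonpos hl3]
  linear_combination (-1 / 6) * hP - (1 / 6) * hδN

end Energy

theorem Real.rpow_div_eq_rpow_sub_mul_sq {c : ℝ} (hc : 0 < c) (a : ℝ) {d : ℝ} (hd : d ≠ 0) :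
    c ^ (a / d) = c ^ ((a - 2 * d) / d) * c ^ 2 := by
  rw [← Real.rpow_natCast, ← Real.rpow_add hc]
  congr 1
  field_simp
  ring

theorem stmt_19_general (l1 l2 l3 p c δp κ μc : ℝ)
    (hl3 : l3 < 0) (hp : 2 < p) (hp' : p < 10 / 3)
    (hδ : δp = 3 * (p - 2) / (2 * p)) (hc : 0 < c)
    (u : E3 → ℝ)
    (hP : 2 * (∫ x : E3, ‖fderiv ℝ u x‖ ^ 2) + 3 * Bdip l1 l2 u -
        4 * |l3| * δp * (∫ x : E3, |u x| ^ p) = 0)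
    (hμ : μc * c ^ 2 = -(1 / 2) * (∫ x : E3, ‖fderiv ℝ u x‖ ^ 2) - Bdip l1 l2 u +
        |l3| * ∫ x : E3, |u x| ^ p)
    (hE : Efun l1 l2 l3 p u < -κ * c ^ ((6 - p) / (2 - p * δp))) :
    μc * c ^ 2 = -(Efun l1 l2 l3 p u) - (1 / 2) * Bdip l1 l2 u +
        (p - 2) * |l3| / p * (∫ x : E3, |u x| ^ p) ∧
    μc * c ^ 2 > κ * c ^ ((6 - p) / (2 - p * δp)) ∧
    μc > κ * c ^ (2 * (p - 2) / (2 - p * δp)) := by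
  have hp0 : p ≠ 0 := by linarith
  have hμE := hμ.trans (neg_Efun_add_third_grad_of_pohozaev hl3.le hp0 hδ hP)
  have hgrad : 0 ≤ ∫ x : E3, ‖fderiv ℝ u x‖ ^ 2 := integral_nonneg fun _ => by positivity
  have hμc2 : μc * c ^ 2 > κ * c ^ ((6 - p) / (2 - p * δp)) := by linarith
  refine ⟨hμ.trans (neg_Efun_sub_half_Bdip_add hl3.le hp0).symm, hμc2, ?_⟩
  have hd : 2 - p * δp = (10 - 3 * p) / 2 := by
    rw [hδ]
    field_simp
    ring
  have hexp : 6 - p - 2 * (2 - p * δp) = 2 * (p - 2) := by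
    rw [hd]
    ring
  rw [Real.rpow_div_eq_rpow_sub_mul_sq hc _ (by rw [hd]; linarith), hexp, ← mul_assoc] at hμc2
  exact lt_of_mul_lt_mul_right hμc2 (sq_nonneg c)

/-- Lower bound for the Lagrange multiplier: if `u ∈ S_c` satisfies the Pohozaev identity
`P(u) = 0`, the multiplier identity, and `E(u) < -κ_{p,λ₃} c^{(6-p)/(2-pδ_p)}`, then
`μ_c c² = -E(u) - ½B(u) + ((p-2)|λ₃|/p)‖u‖_p^p > κ_{p,λ₃} c^{(6-p)/(2-pδ_p)}`, i.e.
`μ_c > κ_{p,λ₃} c^{2(p-2)/(2-pδ_p)}`. -/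
theorem stmt_19 (l1 l2 l3 p c δp Cp κ μc : ℝ)
    (hD0 : (l1 < 4 * π / 3 * l2 ∧ 4 * π / 3 * l2 ≤ 0) ∨
           (l1 < -(8 * π / 3) * l2 ∧ -(8 * π / 3) * l2 ≤ 0))
    (hl3 : l3 < 0) (hp : 2 < p) (hp' : p < 10 / 3)
    (hδ : δp = 3 * (p - 2) / (2 * p)) (hCp : 0 < Cp) (hc : 0 < c)
    (hκ : κ = (10 - 3 * p) / (6 * (p - 2)) *
        (2 * δp * Cp ^ p * |l3|) ^ (2 / (2 - p * δp)))
    (u : E3 → ℝ) (hu : InH1 u) (hmass : (∫ x : E3, (u x) ^ 2) = c ^ 2)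
    (hEneg : Efun l1 l2 l3 p u < 0)
    (hP : 2 * (∫ x : E3, ‖fderiv ℝ u x‖ ^ 2) + 3 * Bdip l1 l2 u -
        4 * |l3| * δp * (∫ x : E3, |u x| ^ p) = 0)
    (hμ : μc * c ^ 2 = -(1 / 2) * (∫ x : E3, ‖fderiv ℝ u x‖ ^ 2) - Bdip l1 l2 u +
        |l3| * ∫ x : E3, |u x| ^ p)
    (hE : Efun l1 l2 l3 p u < -κ * c ^ ((6 - p) / (2 - p * δp))) :
    μc * c ^ 2 = -(Efun l1 l2 l3 p u) - (1 / 2) * Bdip l1 l2 u +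
        (p - 2) * |l3| / p * (∫ x : E3, |u x| ^ p) ∧
    μc * c ^ 2 > κ * c ^ ((6 - p) / (2 - p * δp)) ∧
    μc > κ * c ^ (2 * (p - 2) / (2 - p * δp)) :=
  stmt_19_general l1 l2 l3 p c δp κ μc hl3 hp hp' hδ hc u hP hμ hE
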